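/- arXiv:0912.3670 — 7 statements merged into one kernel-verified Lean document; each statement's English description precedes it below -/
import Mathlib

section
/- For every integer m ≥ 1, the minimum over all monic algebraic polynomials P of degree m with all m zeros on the unit circle of the uniform norm of P on the unit circle equals 2. That is, min{ sup_{|z|=1} |P(z)| : P(z) = ∏_{j=1}^m (z - e^{iφ_j}), φ_j ∈ ℝ } = 2. -/
/-!
If `ζ` is a primitive `m`-th root of unity, averaging a polynomial `Q` of degree `m` over the
rotated roots of unity `w ζ ^ k` kills every coefficient except the constant and the leading one:
for monic `Q`, `∑ k, Q (w ζ ^ k) = m (Q 0 + w ^ m)`. When all zeros of `Q` lie on the unit circle,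
`|Q 0| = 1`; choosing `w` on the circle with `w ^ m = Q 0` gives an average of modulus `2`, so
`|Q| ≥ 2` somewhere on the circle. The bound is attained by `z ^ m - 1`.
-/

open Real Complex

section

open Polynomial Finset

theorem IsPrimitiveRoot.geom_sum_pow_eq_zero {R : Type*} [CommRing R] [IsDomain R] {ζ : R}
    {m : ℕ} (hζ : IsPrimitiveRoot ζ m) {j : ℕ} (hj : ¬ m ∣ j) :
    ∑ k ∈ range m, (ζ ^ j) ^ k = 0 := by
  have hne : 1 - ζ ^ j ≠ 0 := sub_ne_zero.2 fun h => hj ((hζ.pow_eq_one_iff_dvd j).1 h.symm)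
  refine (mul_eq_zero.1 ?_).resolve_left hne
  rw [mul_neg_geom_sum, ← pow_mul, mul_comm, pow_mul, hζ.pow_eq_one, one_pow, sub_self]

theorem Complex.exists_norm_eq_one_norm_add_pow (c : ℂ) {m : ℕ} (hm : m ≠ 0) :
    ∃ w : ℂ, ‖w‖ = 1 ∧ ‖c + w ^ m‖ = ‖c‖ + 1 := by
  rcases eq_or_ne c 0 with rfl | hc
  · exact ⟨1, by simp⟩
  have hc' : ‖c‖ ≠ 0 := norm_ne_zero_iff.2 hc
  have hu : ‖c / ‖c‖‖ = 1 := by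
    rw [norm_div, Complex.norm_of_nonneg (norm_nonneg c), div_self hc']
  obtain ⟨w, hw⟩ := IsAlgClosed.exists_pow_nat_eq (c / ‖c‖) (Nat.pos_of_ne_zero hm)
  refine ⟨w, (pow_eq_one_iff_of_nonneg (norm_nonneg w) hm).1 (by rw [← norm_pow, hw, hu]), ?_⟩
  have hsplit : c + c / ‖c‖ = (‖c‖ + 1 : ℝ) * (c / ‖c‖) := by
    have hcC : (‖c‖ : ℂ) ≠ 0 := ofReal_ne_zero.2 hc'
    push_cast
    field_simp
  rw [hw, hsplit, norm_mul, hu, mul_one, Complex.norm_of_nonneg (by positivity)]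

theorem Polynomial.sum_eval_mul_pow_of_isPrimitiveRoot {R : Type*} [CommRing R] [IsDomain R]
    {ζ : R} {m : ℕ} (hζ : IsPrimitiveRoot ζ m) {Q : R[X]} (hQ : Q.natDegree ≤ m) (w : R) :
    ∑ k ∈ range m, Q.eval (w * ζ ^ k) = m * (Q.coeff 0 + Q.coeff m * w ^ m) := by
  obtain _ | m := m
  · simp
  have hQ' : Q.natDegree < m + 2 := by omega
  calc ∑ k ∈ range (m + 1), Q.eval (w * ζ ^ k)
      = ∑ j ∈ range (m + 2), Q.coeff j * w ^ j * ∑ k ∈ range (m + 1), (ζ ^ j) ^ k := by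
        simp_rw [eval_eq_sum_range' hQ', mul_sum]
        rw [sum_comm]
        refine sum_congr rfl fun j _ => sum_congr rfl fun k _ => ?_
        ring
    _ = (m + 1 : ℕ) * (Q.coeff 0 + Q.coeff (m + 1) * w ^ (m + 1)) := by
        rw [sum_range_succ, sum_range_succ', sum_eq_zero]
        · simp [hζ.pow_eq_one]
          ring
        · intro j hj
          rw [hζ.geom_sum_pow_eq_zero, mul_zero]
          exact Nat.not_dvd_of_pos_of_lt j.succ_pos (by simpa using hj)

theorem Polynomial.Monic.exists_norm_eq_one_le_norm_eval {Q : ℂ[X]} (hQ : Q.Monic)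
    (hdeg : Q.natDegree ≠ 0) : ∃ z : ℂ, ‖z‖ = 1 ∧ ‖Q.coeff 0‖ + 1 ≤ ‖Q.eval z‖ := by
  set m := Q.natDegree
  obtain ⟨w, hw, hcw⟩ := exists_norm_eq_one_norm_add_pow (Q.coeff 0) hdeg
  obtain ⟨ζ, hζ⟩ : ∃ ζ : ℂ, IsPrimitiveRoot ζ m := ⟨_, isPrimitiveRoot_exp m hdeg⟩
  have hsum := sum_eval_mul_pow_of_isPrimitiveRoot hζ le_rfl w
  rw [hQ.coeff_natDegree, one_mul] at hsum
  have hle : ∑ _k ∈ range m, (‖Q.coeff 0‖ + 1) ≤ ∑ k ∈ range m, ‖Q.eval (w * ζ ^ k)‖ :=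
    calc ∑ _k ∈ range m, (‖Q.coeff 0‖ + 1) = ‖∑ k ∈ range m, Q.eval (w * ζ ^ k)‖ := by
          rw [sum_const, card_range, nsmul_eq_mul, hsum, norm_mul, hcw, Complex.norm_natCast]
      _ ≤ _ := norm_sum_le _ _
  obtain ⟨k, -, hk⟩ := exists_le_of_sum_le (nonempty_range_iff.2 hdeg) hle
  exact ⟨_, by simp [hw, hζ.norm'_eq_one hdeg], hk⟩

variable {ι : Type*} [Fintype ι] {a : ι → ℂ}

theorem norm_prod_sub_le_two_pow (ha : ∀ j, ‖a j‖ = 1) {z : ℂ} (hz : ‖z‖ = 1) :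
    ‖∏ j, (z - a j)‖ ≤ 2 ^ Fintype.card ι := by
  rw [norm_prod]
  calc ∏ j, ‖z - a j‖ ≤ ∏ _j : ι, (2 : ℝ) :=
        prod_le_prod (fun _ _ => norm_nonneg _) fun j _ =>
          (norm_sub_le _ _).trans (by rw [hz, ha]; norm_num)
    _ = 2 ^ Fintype.card ι := by rw [prod_const, card_univ]

theorem exists_norm_eq_one_two_le_norm_prod_sub [Nonempty ι] (ha : ∀ j, ‖a j‖ = 1) :
    ∃ z : ℂ, ‖z‖ = 1 ∧ 2 ≤ ‖∏ j, (z - a j)‖ := by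
  have hQ : (∏ j, (X - C (a j))).Monic := monic_prod_of_monic _ _ fun j _ => monic_X_sub_C (a j)
  have hdeg : (∏ j, (X - C (a j))).natDegree ≠ 0 := by simp
  have hc : ‖(∏ j, (X - C (a j))).coeff 0‖ = 1 := by
    simp [coeff_zero_eq_eval_zero, eval_prod, norm_prod, ha]
  obtain ⟨z, hz, hle⟩ := hQ.exists_norm_eq_one_le_norm_eval hdeg
  refine ⟨z, hz, ?_⟩
  simpa [eval_prod, hc, one_add_one_eq_two] using hle

theorem two_le_iSup_norm_prod_exp_sub [Nonempty ι] (φ : ι → ℝ) :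
    2 ≤ ⨆ t : ℝ, ‖∏ j, (exp (t * I) - exp (φ j * I))‖ := by
  obtain ⟨z, hz, h2⟩ :=
    exists_norm_eq_one_two_le_norm_prod_sub fun j => norm_exp_ofReal_mul_I (φ j)
  obtain ⟨t, rfl⟩ := (norm_eq_one_iff z).1 hz
  refine le_ciSup_of_le ⟨2 ^ Fintype.card ι, ?_⟩ t h2
  rintro _ ⟨s, rfl⟩
  exact norm_prod_sub_le_two_pow (fun j => norm_exp_ofReal_mul_I _) (norm_exp_ofReal_mul_I s)

theorem prod_sub_exp_two_pi_mul_div {m : ℕ} (hm : m ≠ 0) (z : ℂ) :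
    ∏ j : Fin m, (z - exp ((2 * π * j / m : ℝ) * I)) = z ^ m - 1 := by
  have h := congrArg (eval z)
    (X_pow_sub_C_eq_prod (isPrimitiveRoot_exp m hm) (Nat.pos_of_ne_zero hm) (one_pow m))
  simp only [eval_sub, eval_pow, eval_X, eval_C, eval_prod, mul_one] at h
  rw [h, Fin.prod_univ_eq_prod_range (fun j => z - exp ((2 * π * j / m : ℝ) * I))]
  refine Finset.prod_congr rfl fun j _ => ?_
  rw [← Complex.exp_nat_mul]
  push_cast
  ring_nf

end

theorem stmt_0 (m : ℕ) (hm : 1 ≤ m) :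
    IsLeast { M : ℝ | ∃ φ : Fin m → ℝ,
      M = ⨆ t : ℝ, ‖(∏ j : Fin m,
        (Complex.exp (t * Complex.I) - Complex.exp ((φ j : ℂ) * Complex.I)))‖ } 2 := by
  have : Nonempty (Fin m) := ⟨⟨0, hm⟩⟩
  refine ⟨⟨fun j => 2 * π * j / m, le_antisymm (two_le_iSup_norm_prod_exp_sub _) ?_⟩, ?_⟩
  · refine ciSup_le fun t => ?_
    rw [prod_sub_exp_two_pi_mul_div (by omega)]
    refine (norm_sub_le _ _).trans ?_
    rw [norm_pow, norm_exp_ofReal_mul_I, one_pow, norm_one, one_add_one_eq_two]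
  · rintro M ⟨φ, rfl⟩
    exact two_le_iSup_norm_prod_exp_sub φ
end

section
/- Let m ≥ 1 and let P(z) = ∏_{j=1}^m (z - e^{iφ_j}) be a monic polynomial with all zeros on the unit circle. Let Ψ = mπ + ∑_{j=1}^m φ_j and θ_l = (Ψ + 2πl)/m for l = 0, …, m−1. Then (1/m) ∑_{l=0}^{m−1} P(e^{iθ_l}) = 2 e^{iΨ}. In particular, sup_{|z|=1} |P(z)| ≥ 2. -/
/-!
The points `e^{iθ_l}` are `c ζ^l` with `ζ` a primitive `m`-th root of unity and `c^m = e^{iΨ}`.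
Averaging `z ↦ z^k` over them gives `0` for `0 < k < m`, so averaging `P` leaves only its constant
term `P(0) = ∏ (-e^{iφ_j}) = e^{iΨ}` and its leading term `c^m = e^{iΨ}`. Hence some `|P(e^{iθ_l})|`
is at least `2`.
-/

open Real Complex Polynomial Finset

namespace IsPrimitiveRoot

variable {K : Type*} [Field K] {ζ : K} {m : ℕ}

lemma sum_mul_pow_pow_eq_zero (hζ : IsPrimitiveRoot ζ m) (c : K) {k : ℕ} (hk0 : k ≠ 0)
    (hkm : k < m) : ∑ l ∈ range m, (c * ζ ^ l) ^ k = 0 := by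
  simp_rw [mul_pow, ← pow_mul, mul_comm _ k, pow_mul, ← mul_sum]
  rw [geom_sum_eq (hζ.pow_ne_one_of_pos_of_lt hk0 hkm), ← pow_mul, mul_comm k, pow_mul,
    hζ.pow_eq_one, one_pow, sub_self, zero_div, mul_zero]

lemma sum_mul_pow_pow_self (hζ : IsPrimitiveRoot ζ m) (c : K) :
    ∑ l ∈ range m, (c * ζ ^ l) ^ m = m * c ^ m := by
  simp_rw [mul_pow, ← pow_mul, mul_comm _ m, pow_mul, hζ.pow_eq_one, one_pow, mul_one, sum_const,
    card_range, nsmul_eq_mul]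

lemma sum_eval_mul_pow (hζ : IsPrimitiveRoot ζ m) {p : K[X]} (hp : p.natDegree ≤ m) (c : K) :
    ∑ l ∈ range m, p.eval (c * ζ ^ l) = m * (p.coeff 0 + p.coeff m * c ^ m) := by
  obtain rfl | hm := eq_or_ne m 0
  · simp
  simp_rw [eval_eq_sum_range' (Nat.lt_succ_of_le hp), sum_comm (s := range m), ← mul_sum]
  rw [sum_eq_add 0 m hm.symm]
  · simp only [pow_zero, sum_const, card_range, nsmul_eq_mul, mul_one, hζ.sum_mul_pow_pow_self]
    ring
  · intro k hk ⟨hk0, hkm⟩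
    rw [hζ.sum_mul_pow_pow_eq_zero c hk0 (by grind), mul_zero]
  all_goals simp

end IsPrimitiveRoot

lemma prod_neg_exp_mul_I {ι : Type*} (s : Finset ι) (φ : ι → ℝ) :
    ∏ j ∈ s, -exp (φ j * I) = exp ((#s * π + ∑ j ∈ s, φ j : ℝ) * I) := by
  have hneg (x : ℝ) : -exp (x * I) = exp ((π + x : ℝ) * I) := by
    rw [ofReal_add, add_mul, Complex.exp_add, exp_pi_mul_I, neg_one_mul]
  simp_rw [hneg, ← Complex.exp_sum, ← sum_mul, ← ofReal_sum, sum_add_distrib, sum_const,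
    nsmul_eq_mul]

lemma bddAbove_range_norm_exp_mul_I {E : Type*} [SeminormedAddCommGroup E] {f : ℂ → E}
    (hf : Continuous f) : BddAbove (Set.range fun t : ℝ => ‖f (exp (t * I))‖) := by
  have hper : Function.Periodic (fun t : ℝ => ‖f (exp (t * I))‖) (2 * π) := fun t => by
    simp only [ofReal_add, add_mul, Complex.exp_add, ofReal_mul, ofReal_ofNat, exp_two_pi_mul_I,
      mul_one]
  exact (hper.compact_of_continuous Real.two_pi_pos.ne' (by fun_prop)).bddAbove

lemma le_ciSup_of_card_mul_le_sum {ι : Type*} {f : ℝ → ℝ} (hf : BddAbove (Set.range f))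
    {s : Finset ι} (hs : s.Nonempty) (θ : ι → ℝ) {r : ℝ} (h : #s * r ≤ ∑ l ∈ s, f (θ l)) :
    r ≤ ⨆ t, f t := by
  obtain ⟨l, -, hl⟩ := exists_le_of_sum_le hs (f := fun _ => r) (g := f ∘ θ)
    (by rwa [sum_const, nsmul_eq_mul])
  exact hl.trans (le_ciSup hf (θ l))

theorem stmt_1 (m : ℕ) (hm : 1 ≤ m) (φ : Fin m → ℝ)
    (P : ℂ → ℂ)
    (hP : ∀ z : ℂ, P z = ∏ j : Fin m, (z - Complex.exp ((φ j : ℂ) * Complex.I)))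
    (Ψ : ℝ) (hΨ : Ψ = m * Real.pi + ∑ j : Fin m, φ j)
    (θ : ℕ → ℝ) (hθ : ∀ l : ℕ, θ l = (Ψ + 2 * Real.pi * l) / m) :
    (1 / (m : ℂ)) * ∑ l ∈ Finset.range m, P (Complex.exp ((θ l : ℂ) * Complex.I))
      = 2 * Complex.exp ((Ψ : ℂ) * Complex.I) ∧
    2 ≤ ⨆ t : ℝ, ‖P (Complex.exp ((t : ℂ) * Complex.I))‖ := by
  have hm0 : m ≠ 0 := by omega
  set Q : ℂ[X] := ∏ j, (X - C (exp (φ j * I)))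
  have hPQ : P = fun z => Q.eval z := funext fun z => by simp [hP, Q, eval_prod]
  have hQ0 : Q.coeff 0 = exp (Ψ * I) := by
    simp [coeff_zero_eq_eval_zero, Q, eval_prod, prod_neg_exp_mul_I, hΨ]
  have hQm : Q.coeff m = 1 := by
    simpa [Q] using (monic_prod_X_sub_C (fun j => exp (φ j * I)) univ).coeff_natDegree
  set c := exp (Ψ / m * I)
  have hcm : c ^ m = exp (Ψ * I) := by
    rw [← Complex.exp_nat_mul]
    field_simp
  have hθc (l : ℕ) : exp (θ l * I) = c * exp (2 * π * I / m) ^ l := by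
    rw [← Complex.exp_nat_mul, ← Complex.exp_add, hθ]
    push_cast
    field_simp
  have hsum : ∑ l ∈ range m, P (exp (θ l * I)) = m * (2 * exp (Ψ * I)) := by
    simp_rw [hθc, hPQ]
    rw [(isPrimitiveRoot_exp m hm0).sum_eval_mul_pow (by simp [Q]), hQ0, hQm, hcm]
    ring
  refine ⟨by rw [hsum]; field_simp, ?_⟩
  refine le_ciSup_of_card_mul_le_sum (bddAbove_range_norm_exp_mul_I (hPQ ▸ Q.continuous))
    (nonempty_range_iff.mpr hm0) θ ?_
  calc (#(range m) : ℝ) * 2 = ‖∑ l ∈ range m, P (exp (θ l * I))‖ := by simp [hsum, norm_exp]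
    _ ≤ _ := norm_sum_le _ _
end

section
/- For m ≥ 1 and 0 < h < 2^m, the set V₀(h) = { x ∈ [0, 2π]^m : ∏_{j=1}^m 2 sin(x_j/2) ≥ h } is a compact and strictly convex subset of ℝ^m with nonempty interior, where strict convexity means: if x, y ∈ V₀(h) with x ≠ y, then ∏_{j=1}^m 2 sin((x_j+y_j)/4) > h, i.e., the midpoint (x+y)/2 lies in the interior of V₀(h). -/
open Real

private lemma sin_half_pos' {t : ℝ} (ht : t ∈ Set.Ioo 0 (2 * Real.pi)) :
    0 < 2 * Real.sin (t / 2) := by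
  have h1 : 0 < t / 2 := by linarith [ht.1]
  have h2 : t / 2 < Real.pi := by linarith [ht.2]
  have := Real.sin_pos_of_pos_of_lt_pi h1 h2
  linarith

private lemma key_le' {u v : ℝ} (hu : u ∈ Set.Ioo 0 (2 * Real.pi))
    (hv : v ∈ Set.Ioo 0 (2 * Real.pi)) :
    ((2 * Real.sin (u / 2)) * (2 * Real.sin (v / 2)) ≤ (2 * Real.sin ((u + v) / 4)) ^ 2) ∧
      (u ≠ v →
        (2 * Real.sin (u / 2)) * (2 * Real.sin (v / 2)) < (2 * Real.sin ((u + v) / 4)) ^ 2) := by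
  have e1 : Real.sin ((u + v) / 4) ^ 2 = 1 / 2 - Real.cos ((u + v) / 2) / 2 := by
    have := Real.sin_sq_eq_half_sub ((u + v) / 4)
    rw [show 2 * ((u + v) / 4) = (u + v) / 2 by ring] at this
    exact this
  have e2 : Real.cos ((u - v) / 2) - Real.cos ((u + v) / 2)
      = 2 * Real.sin (u / 2) * Real.sin (v / 2) := by
    rw [Real.cos_sub_cos]
    rw [show ((u - v) / 2 + (u + v) / 2) / 2 = u / 2 by ring,
      show ((u - v) / 2 - (u + v) / 2) / 2 = -(v / 2) by ring, Real.sin_neg]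
    ring
  constructor
  · have hc := Real.cos_le_one ((u - v) / 2)
    nlinarith [e1, e2]
  · intro huv
    have hπ := Real.pi_pos
    have hb1 : -(2 * Real.pi) < (u - v) / 2 := by
      have := hu.1; have := hv.2; linarith
    have hb2 : (u - v) / 2 < 2 * Real.pi := by
      have := hu.2; have := hv.1; linarith
    have hne : Real.cos ((u - v) / 2) ≠ 1 := by
      intro hc
      have := (Real.cos_eq_one_iff_of_lt_of_lt hb1 hb2).1 hc
      apply huv; linarith
    have hc := lt_of_le_of_ne (Real.cos_le_one ((u - v) / 2)) hne
    nlinarith [e1, e2]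

private lemma key_cvx' {u v a b : ℝ} (hu : u ∈ Set.Ioo 0 (2 * Real.pi))
    (hv : v ∈ Set.Ioo 0 (2 * Real.pi)) (ha : 0 ≤ a) (hb : 0 ≤ b) (hab : a + b = 1) :
    (2 * Real.sin (u / 2)) ^ a * (2 * Real.sin (v / 2)) ^ b
      ≤ 2 * Real.sin ((a * u + b * v) / 2) := by
  have hpu := sin_half_pos' hu
  have hpv := sin_half_pos' hv
  have hgm := Real.geom_mean_le_arith_mean2_weighted ha hb hpu.le hpv.le hab
  have hπ := Real.pi_pos
  have hmu : u / 2 ∈ Set.Icc (0 : ℝ) Real.pi := ⟨by linarith [hu.1], by linarith [hu.2]⟩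
  have hmv : v / 2 ∈ Set.Icc (0 : ℝ) Real.pi := ⟨by linarith [hv.1], by linarith [hv.2]⟩
  have hs := (strictConcaveOn_sin_Icc.concaveOn).2 hmu hmv ha hb hab
  simp only [smul_eq_mul] at hs
  rw [show a * (u / 2) + b * (v / 2) = (a * u + b * v) / 2 by ring] at hs
  nlinarith [hgm, hs]

theorem stmt_6 (m : ℕ) (hm : 1 ≤ m) (h : ℝ) (hh : 0 < h) (hh2 : h < 2 ^ m) :
    let V₀ : Set (Fin m → ℝ) :=
      {x | (∀ j, x j ∈ Set.Icc 0 (2 * Real.pi)) ∧ h ≤ ∏ j, 2 * Real.sin (x j / 2)}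
    IsCompact V₀ ∧ Convex ℝ V₀ ∧ (interior V₀).Nonempty ∧
      ∀ x ∈ V₀, ∀ y ∈ V₀, x ≠ y →
        (h < ∏ j, 2 * Real.sin ((x j + y j) / 2 / 2) ∧
          (fun j => (x j + y j) / 2) ∈ interior V₀) := by
  intro V₀
  have hπ := Real.pi_pos
  -- coordinates of points of V₀ are in the open interval, and factors are positive
  have coord_mem : ∀ x : Fin m → ℝ, x ∈ V₀ →
      ∀ j, x j ∈ Set.Ioo 0 (2 * Real.pi) ∧ 0 < 2 * Real.sin (x j / 2) := by
    intro x hx j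
    obtain ⟨hxc, hxp⟩ := hx
    have hnn : ∀ i, 0 ≤ 2 * Real.sin (x i / 2) := by
      intro i
      have h1 := (hxc i).1; have h2 := (hxc i).2
      have := Real.sin_nonneg_of_nonneg_of_le_pi (x := x i / 2) (by linarith) (by linarith)
      linarith
    have hne : 2 * Real.sin (x j / 2) ≠ 0 := by
      intro h0
      have : (∏ i, 2 * Real.sin (x i / 2)) = 0 :=
        Finset.prod_eq_zero (Finset.mem_univ j) h0
      rw [this] at hxp; linarith
    have hpos : 0 < 2 * Real.sin (x j / 2) := lt_of_le_of_ne (hnn j) (Ne.symm hne)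
    refine ⟨⟨?_, ?_⟩, hpos⟩
    · rcases (hxc j).1.lt_or_eq with h1 | h1
      · exact h1
      · exfalso
        rw [← h1] at hpos
        norm_num at hpos
    · rcases (hxc j).2.lt_or_eq with h1 | h1
      · exact h1
      · exfalso
        rw [h1, show 2 * Real.pi / 2 = Real.pi by ring, Real.sin_pi] at hpos
        linarith
  -- continuity of the product map
  have hcont : Continuous (fun x : Fin m → ℝ => ∏ j, 2 * Real.sin (x j / 2)) := by
    apply continuous_finset_prod
    intro j _
    exact continuous_const.mul (Real.continuous_sin.comp ((continuous_apply j).div_const 2))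
  -- the open set U
  set U : Set (Fin m → ℝ) :=
    {x | (∀ j, x j ∈ Set.Ioo 0 (2 * Real.pi)) ∧ h < ∏ j, 2 * Real.sin (x j / 2)} with hU
  have hUopen : IsOpen U := by
    rw [hU, Set.setOf_and]
    apply IsOpen.inter
    · have : {x : Fin m → ℝ | ∀ j, x j ∈ Set.Ioo 0 (2 * Real.pi)}
          = Set.univ.pi (fun _ => Set.Ioo 0 (2 * Real.pi)) := by
        ext x
        simp only [Set.mem_pi, Set.mem_univ, forall_true_left, Set.mem_setOf_eq, true_implies]
      rw [this]
      exact isOpen_set_pi Set.finite_univ (fun _ _ => isOpen_Ioo)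
    · exact isOpen_lt continuous_const hcont
  have hUsub : U ⊆ V₀ := fun x hx => ⟨fun j => ⟨(hx.1 j).1.le, (hx.1 j).2.le⟩, hx.2.le⟩
  have hUint : U ⊆ interior V₀ := interior_maximal hUsub hUopen
  -- compactness
  have hVclosed : IsClosed V₀ := by
    have heq : V₀ = {x : Fin m → ℝ | ∀ j, x j ∈ Set.Icc 0 (2 * Real.pi)}
        ∩ {x | h ≤ ∏ j, 2 * Real.sin (x j / 2)} := rfl
    rw [heq]
    refine IsClosed.inter ?_ (isClosed_le continuous_const hcont)
    have : {x : Fin m → ℝ | ∀ j, x j ∈ Set.Icc 0 (2 * Real.pi)}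
        = Set.univ.pi (fun _ => Set.Icc 0 (2 * Real.pi)) := by
      ext x
      simp only [Set.mem_pi, Set.mem_univ, forall_true_left, Set.mem_setOf_eq, true_implies]
    rw [this]
    exact isClosed_set_pi (fun _ _ => isClosed_Icc)
  have hcomp : IsCompact V₀ := by
    refine (isCompact_univ_pi (fun _ : Fin m => isCompact_Icc (a := (0:ℝ)) (b := 2 * Real.pi))).of_isClosed_subset hVclosed ?_
    intro x hx
    exact fun i _ => hx.1 i
  -- convexity
  have hconv : Convex ℝ V₀ := by
    intro x hx y hy a b ha hb hab
    refine ⟨fun j => convex_Icc 0 (2 * Real.pi) (hx.1 j) (hy.1 j) ha hb hab, ?_⟩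
    have hprodx : 0 < ∏ j, 2 * Real.sin (x j / 2) := lt_of_lt_of_le hh hx.2
    calc h = h ^ a * h ^ b := by rw [← Real.rpow_add hh, hab, Real.rpow_one]
      _ ≤ (∏ j, 2 * Real.sin (x j / 2)) ^ a * (∏ j, 2 * Real.sin (y j / 2)) ^ b := by
          exact mul_le_mul (Real.rpow_le_rpow hh.le hx.2 ha)
            (Real.rpow_le_rpow hh.le hy.2 hb) (Real.rpow_nonneg hh.le b)
            (Real.rpow_nonneg hprodx.le a)
      _ = ∏ j, (2 * Real.sin (x j / 2)) ^ a * (2 * Real.sin (y j / 2)) ^ b := by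
          rw [← Real.finset_prod_rpow _ _ (fun i _ => (coord_mem x hx i).2.le) a,
            ← Real.finset_prod_rpow _ _ (fun i _ => (coord_mem y hy i).2.le) b,
            ← Finset.prod_mul_distrib]
      _ ≤ ∏ j, 2 * Real.sin ((a • x + b • y) j / 2) := by
          apply Finset.prod_le_prod
          · intro i _
            exact mul_nonneg (Real.rpow_nonneg (coord_mem x hx i).2.le a)
              (Real.rpow_nonneg (coord_mem y hy i).2.le b)
          · intro i _
            have hk := key_cvx' (coord_mem x hx i).1 (coord_mem y hy i).1 ha hb hab
            simpa [Pi.add_apply, Pi.smul_apply, smul_eq_mul] using hk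
  -- interior nonempty
  have hcU : (fun _ : Fin m => Real.pi) ∈ U := by
    refine ⟨fun j => ⟨hπ, by linarith⟩, ?_⟩
    have : (∏ _j : Fin m, (2 : ℝ)) = 2 ^ m := by
      simp [Finset.prod_const, Finset.card_univ]
    simpa [Real.sin_pi_div_two, this] using hh2
  refine ⟨hcomp, hconv, ⟨fun _ => Real.pi, hUint hcU⟩, ?_⟩
  -- strict midpoint convexity
  intro x hx y hy hxy
  obtain ⟨j0, hj0⟩ := Function.ne_iff.1 hxy
  have hmemx := coord_mem x hx
  have hmemy := coord_mem y hy
  have hPj : ∀ j, 0 < 2 * Real.sin ((x j + y j) / 4) := by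
    intro j
    have h1 := (hmemx j).1; have h2 := (hmemy j).1
    have hp : 0 < (x j + y j) / 4 := by have := h1.1; have := h2.1; linarith
    have hq : (x j + y j) / 4 < Real.pi := by have := h1.2; have := h2.2; linarith
    have := Real.sin_pos_of_pos_of_lt_pi hp hq
    linarith
  have hP : 0 < ∏ j, 2 * Real.sin ((x j + y j) / 4) :=
    Finset.prod_pos (fun j _ => hPj j)
  have hsq : (∏ j, (2 * Real.sin (x j / 2)) * (2 * Real.sin (y j / 2)))
      < ∏ j, (2 * Real.sin ((x j + y j) / 4)) ^ 2 := by
    refine Finset.prod_lt_prod (fun i _ => mul_pos (hmemx i).2 (hmemy i).2)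
      (fun i _ => (key_le' (hmemx i).1 (hmemy i).1).1)
      ⟨j0, Finset.mem_univ j0, (key_le' (hmemx j0).1 (hmemy j0).1).2 hj0⟩
  have hsplit : (∏ j, (2 * Real.sin (x j / 2)) * (2 * Real.sin (y j / 2)))
      = (∏ j, 2 * Real.sin (x j / 2)) * (∏ j, 2 * Real.sin (y j / 2)) :=
    Finset.prod_mul_distrib
  have hpow : (∏ j, (2 * Real.sin ((x j + y j) / 4)) ^ 2)
      = (∏ j, 2 * Real.sin ((x j + y j) / 4)) ^ 2 := by
    rw [Finset.prod_pow]
  have hhh : h * h ≤ (∏ j, 2 * Real.sin (x j / 2)) * (∏ j, 2 * Real.sin (y j / 2)) :=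
    mul_le_mul hx.2 hy.2 hh.le (le_trans hh.le hx.2)
  have hlt4 : h < ∏ j, 2 * Real.sin ((x j + y j) / 4) := by
    rw [hsplit, hpow] at hsq
    nlinarith [hP, hh, hsq, hhh]
  have hlt : h < ∏ j, 2 * Real.sin ((x j + y j) / 2 / 2) := by
    have : (∏ j, 2 * Real.sin ((x j + y j) / 2 / 2))
        = ∏ j, 2 * Real.sin ((x j + y j) / 4) := by
      apply Finset.prod_congr rfl
      intro j _
      rw [show (x j + y j) / 2 / 2 = (x j + y j) / 4 by ring]
    rw [this]
    exact hlt4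
  refine ⟨hlt, hUint ?_⟩
  refine ⟨fun j => ?_, by simpa using hlt⟩
  have h1 := (hmemx j).1; have h2 := (hmemy j).1
  constructor
  · have := h1.1; have := h2.1; simp only []; linarith
  · have := h1.2; have := h2.2; simp only []; linarith
end

section
/- Let m ≥ 2 and partition ℝ^m into half-open cubes U_k = ∏_{i=1}^m [2πk_i, 2π(k_i+1)) for k ∈ ℤ^m. Let ℤ₀^m = {k ∈ ℤ^m : k_1 = 0}. Then any line ℓ in ℝ^m with direction vector (1,1,…,1) intersects at most m of the cubes { U_k : k ∈ ℤ₀^m }. -/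
/-!
For a point `x + t(1,…,1)` of the line, the index of the cube containing it is the
vector `⌊(x + t) / 2π⌋`, which is monotone in `t`; so the cubes met by the line form a
chain in `ℤ^m`, and the coordinate sum is injective on it. On the band, `t` runs over an
interval of length `2π`, so each coordinate of the index takes at most two values and the
first one only the value `0`: the coordinate sum takes at most `m` values.
-/

open Real

theorem IsChain.finite_ncard_le_of_subset_Icc {ι : Type*} [Fintype ι] {S : Set (ι → ℤ)}
    (hS : IsChain (· ≤ ·) S) {a b : ι → ℤ} (hab : S ⊆ Set.Icc a b) :
    S.Finite ∧ S.ncard ≤ (∑ i, (b i - a i) + 1).toNat := by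
  set σ : (ι → ℤ) → ℤ := fun k ↦ ∑ i, k i
  have hinj : Set.InjOn σ S := by
    intro k hk k' hk' hσ
    rcases hS.total hk hk' with hle | hle
    · exact funext ((Finset.sum_eq_sum_iff_of_le fun i _ ↦ hle i).1 hσ · (Finset.mem_univ _))
    · exact (funext ((Finset.sum_eq_sum_iff_of_le fun i _ ↦ hle i).1 hσ.symm ·
        (Finset.mem_univ _))).symm
  have hmaps : σ '' S ⊆ Set.Icc (∑ i, a i) (∑ i, b i) := by
    rintro _ ⟨k, hk, rfl⟩
    exact ⟨Finset.sum_le_sum fun i _ ↦ (hab hk).1 i, Finset.sum_le_sum fun i _ ↦ (hab hk).2 i⟩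
  have hfin : (σ '' S).Finite := (Set.finite_Icc _ _).subset hmaps
  refine ⟨hfin.of_finite_image hinj, ?_⟩
  calc S.ncard = (σ '' S).ncard := hinj.ncard_image.symm
    _ ≤ (Set.Icc (∑ i, a i) (∑ i, b i)).ncard := Set.ncard_le_ncard hmaps (Set.finite_Icc _ _)
    _ = (∑ i, (b i - a i) + 1).toNat := by
      rw [← Finset.coe_Icc, Set.ncard_coe_finset, Int.card_Icc, Finset.sum_sub_distrib]
      ring_nf

theorem Int.floor_div_eq_iff_mem_Ico {c : ℝ} (hc : 0 < c) (y : ℝ) (k : ℤ) :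
    ⌊y / c⌋ = k ↔ y ∈ Set.Ico (c * k) (c * (k + 1)) := by
  rw [Int.floor_eq_iff, le_div_iff₀ hc, div_lt_iff₀ hc, mul_comm c, mul_comm c]
  rfl

theorem Int.floor_mem_Icc_floor_ceil {u v : ℝ} (hv : v ∈ Set.Ico u (u + 1)) :
    ⌊v⌋ ∈ Set.Icc ⌊u⌋ ⌈u⌉ :=
  ⟨Int.floor_le_floor hv.1, Int.floor_le_iff.2 (hv.2.trans_le (by gcongr; exact Int.le_ceil u))⟩

theorem Int.floor_add_div_mem_Icc {c : ℝ} (hc : 0 < c) {y₀ t : ℝ} (ht : ⌊(y₀ + t) / c⌋ = 0)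
    (y : ℝ) : ⌊(y + t) / c⌋ ∈ Set.Icc ⌊(y - y₀) / c⌋ ⌈(y - y₀) / c⌉ := by
  have ht' := Int.floor_eq_zero_iff.1 ht
  have hshift : (y + t) / c = (y - y₀) / c + (y₀ + t) / c := by field_simp; ring
  exact Int.floor_mem_Icc_floor_ceil (by rw [hshift]; constructor <;> linarith [ht'.1, ht'.2])

theorem sum_ceil_sub_floor_le_card_sub_one {ι : Type*} [Fintype ι] [DecidableEq ι]
    (u : ι → ℝ) {i₀ : ι} (h₀ : u i₀ = 0) : ∑ i, (⌈u i⌉ - ⌊u i⌋) ≤ Fintype.card ι - 1 := by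
  rw [← Finset.add_sum_erase _ _ (Finset.mem_univ i₀), h₀, Int.ceil_zero, Int.floor_zero]
  calc 0 - 0 + ∑ i ∈ Finset.univ.erase i₀, (⌈u i⌉ - ⌊u i⌋) ≤ ∑ i ∈ Finset.univ.erase i₀, 1 := by
        rw [sub_self, zero_add]
        exact Finset.sum_le_sum fun i _ ↦ by linarith [Int.ceil_le_floor_add_one (u i)]
    _ = Fintype.card ι - 1 := by
      simp [Finset.card_erase_of_mem, Nat.cast_sub (Fintype.card_pos_iff.2 ⟨i₀⟩)]

theorem stmt_8 (m : ℕ) (hm : 2 ≤ m) (x : Fin m → ℝ) :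
    let S : Set (Fin m → ℤ) := {k | k ⟨0, by omega⟩ = 0 ∧
      ∃ t : ℝ, ∀ i, x i + t ∈ Set.Ico (2 * Real.pi * k i) (2 * Real.pi * (k i + 1))}
    S.Finite ∧ S.ncard ≤ m := by
  intro S
  set i₀ : Fin m := ⟨0, by omega⟩
  have hc : 0 < 2 * π := by positivity
  set cube : ℝ → Fin m → ℤ := fun t i ↦ ⌊(x i + t) / (2 * π)⌋
  set u : Fin m → ℝ := fun i ↦ (x i - x i₀) / (2 * π)
  have hS : S = cube '' {t | cube t i₀ = 0} := by
    ext k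
    simp only [S, Set.mem_image, ← Int.floor_div_eq_iff_mem_Ico hc, cube, funext_iff]
    constructor
    · rintro ⟨hk₀, t, ht⟩
      exact ⟨t, (ht i₀).trans hk₀, ht⟩
    · rintro ⟨t, ht₀, ht⟩
      exact ⟨(ht i₀).symm.trans ht₀, t, ht⟩
  rw [hS]
  have hchain : IsChain (· ≤ ·) (cube '' {t | cube t i₀ = 0}) :=
    (Monotone.isChain_range (f := cube) fun t t' htt i ↦ Int.floor_le_floor (by gcongr)).mono
      (Set.image_subset_range _ _)
  have hbox : cube '' {t | cube t i₀ = 0} ⊆ Set.Icc (fun i ↦ ⌊u i⌋) (fun i ↦ ⌈u i⌉) := by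
    rintro _ ⟨t, ht, rfl⟩
    exact ⟨fun i ↦ (Int.floor_add_div_mem_Icc hc ht (x i)).1,
      fun i ↦ (Int.floor_add_div_mem_Icc hc ht (x i)).2⟩
  obtain ⟨hfin, hcard⟩ := hchain.finite_ncard_le_of_subset_Icc hbox
  refine ⟨hfin, hcard.trans ?_⟩
  have hwidth := sum_ceil_sub_floor_le_card_sub_one u (i₀ := i₀) (by simp [u])
  rw [Fintype.card_fin] at hwidth
  omega
end

section
/- Let n ≥ 1, y > 1, and f(t) = T_n( y^{1/n} cos t − y^{1/n} + 1 ) with T_n the Chebyshev polynomial of the first kind. Then the Lebesgue measure of the set { t ∈ [0, 2π) : |f(t)| ≥ 1 } equals 2π − 4 arcsin( (1/y)^{1/(2n)} ) = 4 arccos( y^{−1/(2n)} ). -/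
open Real MeasureTheory Polynomial


lemma cheb_ge (x : ℝ) (hx : 1 ≤ x) : ∀ k : ℕ,
    1 ≤ (Polynomial.Chebyshev.T ℝ k).eval x ∧
    (Polynomial.Chebyshev.T ℝ k).eval x ≤ (Polynomial.Chebyshev.T ℝ ((k:ℤ)+1)).eval x := by
  intro k
  induction k using Nat.twoStepInduction with
  | zero => simp [Polynomial.Chebyshev.T_zero, Polynomial.Chebyshev.T_one]; exact hx
  | one =>
    have h2 : ((1:ℕ):ℤ) + 1 = (0:ℤ) + 2 := by norm_num
    rw [h2, Polynomial.Chebyshev.T_add_two]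
    simp [Polynomial.Chebyshev.T_zero, Polynomial.Chebyshev.T_one]
    exact ⟨hx, by nlinarith⟩
  | more k ih1 ih2 =>
    obtain ⟨ha, hab⟩ := ih1
    obtain ⟨hb, hbc⟩ := ih2
    have e1 : ((k+2:ℕ):ℤ) = (k:ℤ) + 2 := by push_cast; ring
    have e2 : (k:ℤ) + 2 + 1 = ((k:ℤ)+1) + 2 := by ring
    have e3 : ((k+1:ℕ):ℤ) = (k:ℤ) + 1 := by push_cast; ring
    rw [e3] at hb hbc
    have e4 : ((k:ℤ)+1) + 1 = (k:ℤ) + 2 := by ring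
    rw [e4] at hbc
    constructor
    · rw [e1, Polynomial.Chebyshev.T_add_two]
      simp only [Polynomial.eval_sub, Polynomial.eval_mul, Polynomial.eval_ofNat,
        Polynomial.eval_X] at *
      nlinarith
    · rw [e1, e2, Polynomial.Chebyshev.T_add_two (R:=ℝ) ((k:ℤ)+1)]
      rw [e4]
      simp only [Polynomial.eval_sub, Polynomial.eval_mul, Polynomial.eval_ofNat,
        Polynomial.eval_X] at *
      nlinarith

lemma cheb_gt (x : ℝ) (hx : 1 < x) (k : ℕ) (hk : 1 ≤ k) :
    1 < (Polynomial.Chebyshev.T ℝ k).eval x := by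
  obtain ⟨m, rfl⟩ := Nat.exists_eq_add_of_le hk
  induction m with
  | zero => simp [Polynomial.Chebyshev.T_one]; exact hx
  | succ m ih =>
    have e1 : ((1+(m+1):ℕ):ℤ) = ((m:ℤ)) + 2 := by push_cast; ring
    have e2 : ((1+m:ℕ):ℤ) = (m:ℤ) + 1 := by push_cast; ring
    rw [e1, Polynomial.Chebyshev.T_add_two]
    rw [e2] at ih
    have h1 := (cheb_ge x hx.le m).1
    have h2 := (cheb_ge x hx.le m).2
    specialize ih (by omega)
    simp only [Polynomial.eval_sub, Polynomial.eval_mul, Polynomial.eval_ofNat,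
      Polynomial.eval_X] at *
    nlinarith

lemma cheb_parity : ∀ k : ℕ, ∀ x : ℝ,
    (Polynomial.Chebyshev.T ℝ k).eval (-x) = (-1:ℝ)^k * (Polynomial.Chebyshev.T ℝ k).eval x := by
  intro k
  induction k using Nat.twoStepInduction with
  | zero => intro x; simp [Polynomial.Chebyshev.T_zero]
  | one => intro x; simp [Polynomial.Chebyshev.T_one]
  | more k ih1 ih2 =>
    intro x
    have e1 : ((k+2:ℕ):ℤ) = (k:ℤ) + 2 := by push_cast; ring
    have e3 : ((k+1:ℕ):ℤ) = (k:ℤ) + 1 := by push_cast; ring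
    rw [e1, Polynomial.Chebyshev.T_add_two]
    have h1 := ih1 x
    have h2 := ih2 x
    rw [e3] at h2
    simp only [Polynomial.eval_sub, Polynomial.eval_mul, Polynomial.eval_ofNat,
      Polynomial.eval_X, h1, h2, pow_succ]
    ring

lemma cos_set_eq {c : ℝ} (hc1 : -1 < c) (hc2 : c < 1) :
    {t : ℝ | t ∈ Set.Ico 0 (2*π) ∧ Real.cos t ≤ c}
      = Set.Icc (Real.arccos c) (2*π - Real.arccos c) := by
  have ha0 : 0 < Real.arccos c := Real.arccos_pos.2 hc2
  have hapi : Real.arccos c < π := lt_of_le_of_ne (Real.arccos_le_pi c) (fun h => by have := Real.arccos_eq_pi.1 h; linarith)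
  have hpi : 0 < π := Real.pi_pos
  have hca : Real.cos (Real.arccos c) = c := Real.cos_arccos hc1.le hc2.le
  ext t
  simp only [Set.mem_setOf_eq, Set.mem_Ico, Set.mem_Icc]
  constructor
  · rintro ⟨⟨ht0, ht2⟩, hct⟩
    rcases le_or_gt t π with h | h
    · constructor
      · by_contra hlt
        push_neg at hlt
        have : c < Real.cos t := by
          calc c = Real.cos (Real.arccos c) := hca.symm
          _ < Real.cos t := Real.cos_lt_cos_of_nonneg_of_le_pi ht0 (Real.arccos_le_pi c) hlt
        linarith
      · linarith
    · have h1 : Real.cos (2*π - t) ≤ c := by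
        rw [Real.cos_two_pi_sub]; exact hct
      have h2 : Real.arccos c ≤ 2*π - t := by
        by_contra hlt
        push_neg at hlt
        have : c < Real.cos (2*π - t) := by
          calc c = Real.cos (Real.arccos c) := hca.symm
          _ < Real.cos (2*π - t) := Real.cos_lt_cos_of_nonneg_of_le_pi (by linarith) (Real.arccos_le_pi c) hlt
        linarith
      constructor <;> linarith
  · rintro ⟨h1, h2⟩
    refine ⟨⟨by linarith, by linarith⟩, ?_⟩
    rcases le_or_gt t π with h | h
    · calc Real.cos t ≤ Real.cos (Real.arccos c) :=
        Real.cos_le_cos_of_nonneg_of_le_pi ha0.le h h1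
      _ = c := hca
    · have : Real.cos t = Real.cos (2*π - t) := (Real.cos_two_pi_sub t).symm
      rw [this]
      calc Real.cos (2*π - t) ≤ Real.cos (Real.arccos c) :=
        Real.cos_le_cos_of_nonneg_of_le_pi ha0.le (by linarith) (by linarith)
      _ = c := hca

lemma cos_fiber_subset (a : ℝ) :
    {t : ℝ | t ∈ Set.Ico 0 (2*π) ∧ Real.cos t = a}
      ⊆ {Real.arccos a, 2*π - Real.arccos a} := by
  rintro t ⟨⟨ht0, ht2⟩, hct⟩
  rcases le_or_gt t π with h | h
  · left
    rw [← hct, Real.arccos_cos ht0 h]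
  · right
    have h1 : Real.cos (2*π - t) = a := by rw [Real.cos_two_pi_sub]; exact hct
    have h2 : Real.arccos a = 2*π - t := by
      rw [← h1, Real.arccos_cos (by linarith) (by linarith)]
    simp only [Set.mem_singleton_iff]; linarith


theorem stmt_13 (n : ℕ) (hn : 1 ≤ n) (y : ℝ) (hy : 1 < y)
    (f : ℝ → ℝ)
    (hf : ∀ t, f t = (Polynomial.Chebyshev.T ℝ n).eval
      (y ^ ((1 : ℝ) / n) * Real.cos t - y ^ ((1 : ℝ) / n) + 1)) :
    volume {t : ℝ | t ∈ Set.Ico 0 (2 * Real.pi) ∧ 1 ≤ |f t|}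
      = ENNReal.ofReal (2 * Real.pi - 4 * Real.arcsin ((1 / y) ^ ((1 : ℝ) / (2 * n)))) ∧
    2 * Real.pi - 4 * Real.arcsin ((1 / y) ^ ((1 : ℝ) / (2 * n)))
      = 4 * Real.arccos (y ^ (-(1 : ℝ) / (2 * n))) := by
  have hy0 : (0:ℝ) < y := by linarith
  have hn0 : (0:ℝ) < (n:ℝ) := by exact_mod_cast Nat.pos_of_ne_zero (by omega)
  obtain ⟨l, hl_def⟩ : ∃ l : ℝ, y ^ ((1:ℝ)/n) = l := ⟨_, rfl⟩
  rw [hl_def] at hf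
  have hl : 1 < l := by
    rw [← hl_def]
    exact Real.one_lt_rpow_iff_of_pos hy0 |>.2 (Or.inl ⟨hy, by positivity⟩)
  have hl0 : 0 < l := by linarith
  obtain ⟨s, hs_def⟩ : ∃ s : ℝ, (1/y) ^ ((1:ℝ)/(2*(n:ℝ))) = s := ⟨_, rfl⟩
  rw [hs_def]
  have hs0 : 0 < s := by rw [← hs_def]; exact Real.rpow_pos_of_pos (by positivity) _
  have hs1 : s < 1 := by
    rw [← hs_def]
    exact Real.rpow_lt_one (by positivity) (by rw [div_lt_one hy0]; linarith) (by positivity)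
  have hs2 : s^2 = 1/l := by
    rw [← hs_def, ← hl_def, ← Real.rpow_natCast ((1/y) ^ ((1:ℝ)/(2*(n:ℝ)))) 2,
      ← Real.rpow_mul (by positivity)]
    rw [show ((1:ℝ)/(2*(n:ℝ)) * ((2:ℕ):ℝ)) = 1/(n:ℝ) by push_cast; field_simp]
    rw [one_div y, Real.inv_rpow hy0.le]
    exact (one_div _).symm
  obtain ⟨c, hc_def⟩ : ∃ c : ℝ, 1 - 2/l = c := ⟨_, rfl⟩
  have hc1 : -1 < c := by
    have : 2/l < 2 := by rw [div_lt_iff₀ hl0]; nlinarith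
    rw [← hc_def]; linarith
  have hc2 : c < 1 := by
    have : 0 < 2/l := by positivity
    rw [← hc_def]; linarith
  have hsin : Real.sin (Real.arcsin s) = s := Real.sin_arcsin (by linarith) hs1.le
  have hcl : c * l = l - 2 := by rw [← hc_def]; field_simp
  have hsl : s^2 * l = 1 := by rw [hs2]; field_simp
  have harc : Real.arccos c = 2 * Real.arcsin s := by
    have h2 : Real.cos (2 * Real.arcsin s) = c := by
      rw [Real.cos_two_mul]
      have hsc := Real.sin_sq_add_cos_sq (Real.arcsin s)
      rw [hsin] at hsc
      nlinarith [hcl, hsl, hsc, hl0]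
    rw [← h2, Real.arccos_cos]
    · linarith [Real.arcsin_nonneg.2 hs0.le]
    · linarith [Real.arcsin_le_pi_div_two s]
  have hsy : y ^ (-(1:ℝ) / (2*(n:ℝ))) = s := by
    rw [← hs_def, neg_div, Real.rpow_neg hy0.le, one_div y,
      Real.inv_rpow hy0.le]
  -- second conjunct
  have hconj2 : 2 * π - 4 * Real.arcsin s = 4 * Real.arccos (y ^ (-(1:ℝ) / (2*(n:ℝ)))) := by
    rw [hsy, Real.arccos_eq_pi_div_two_sub_arcsin]
    ring
  refine ⟨?_, hconj2⟩
  -- main measure computation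
  have ha0 : 0 < Real.arccos c := Real.arccos_pos.2 hc2
  have hapi : Real.arccos c < π :=
    lt_of_le_of_ne (Real.arccos_le_pi c) (fun h => by have := Real.arccos_eq_pi.1 h; linarith)
  have hpi : (0:ℝ) < π := Real.pi_pos
  have hcosset := cos_set_eq hc1 hc2
  obtain ⟨A, hA_def⟩ : ∃ A : Set ℝ, {t : ℝ | t ∈ Set.Ico 0 (2*π) ∧ 1 ≤ |f t|} = A := ⟨_, rfl⟩
  obtain ⟨B, hB_def⟩ : ∃ B : Set ℝ, Set.Icc (Real.arccos c) (2*π - Real.arccos c) = B := ⟨_, rfl⟩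
  rw [hA_def]
  -- B ⊆ A
  have hBA : B ⊆ A := by
    intro t ht
    rw [← hB_def, ← hcosset] at ht
    rw [← hA_def]
    obtain ⟨htI, hct⟩ := ht
    refine ⟨htI, ?_⟩
    obtain ⟨x, hx_def⟩ : ∃ x : ℝ, l * Real.cos t - l + 1 = x := ⟨_, rfl⟩
    have hx : x ≤ -1 := by
      have h5 : l * Real.cos t ≤ l * c := mul_le_mul_of_nonneg_left hct hl0.le
      linarith only [hcl, hx_def, h5]
    have hfx : f t = (Polynomial.Chebyshev.T ℝ n).eval x := by rw [hf t, hx_def]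
    have hnegx : (1:ℝ) ≤ -x := by linarith
    have hpar := cheb_parity n (-x)
    rw [neg_neg] at hpar
    have hge := (cheb_ge (-x) hnegx n).1
    rw [hfx, hpar, abs_mul, abs_pow, abs_neg, abs_one, one_pow, one_mul]
    calc (1:ℝ) ≤ (Polynomial.Chebyshev.T ℝ n).eval (-x) := hge
    _ ≤ |(Polynomial.Chebyshev.T ℝ n).eval (-x)| := le_abs_self _
  -- A \ B is finite
  have hABfin : (A \ B).Finite := by
    obtain ⟨P, hP_def⟩ : ∃ P : Polynomial ℝ, (Polynomial.Chebyshev.T ℝ n)^2 - 1 = P := ⟨_, rfl⟩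
    have hP0 : P ≠ 0 := by
      intro h
      have h2 := cheb_gt 2 (by norm_num) n hn
      have h3 : P.eval 2 = 0 := by rw [h]; simp
      rw [← hP_def] at h3
      simp only [Polynomial.eval_sub, Polynomial.eval_pow, Polynomial.eval_one] at h3
      obtain ⟨e, he_def⟩ : ∃ e : ℝ, (Polynomial.Chebyshev.T ℝ n).eval 2 = e := ⟨_, rfl⟩
      rw [he_def] at h2 h3
      nlinarith [h2, h3]
    have hSfin : {x : ℝ | Polynomial.IsRoot P x}.Finite := Polynomial.finite_setOf_isRoot hP0
    obtain ⟨φ, hφ_def⟩ : ∃ φ : ℝ → ℝ, (fun a : ℝ => (a + l - 1)/l) = φ := ⟨_, rfl⟩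
    have hsub : A \ B ⊆ ⋃ a ∈ φ '' {x : ℝ | Polynomial.IsRoot P x},
        {t : ℝ | t ∈ Set.Ico 0 (2*π) ∧ Real.cos t = a} := by
      rintro t ⟨htA, htB⟩
      rw [← hA_def] at htA
      obtain ⟨htI, hft⟩ := htA
      have hct : c < Real.cos t := by
        by_contra hle
        push_neg at hle
        have : t ∈ B := by rw [← hB_def, ← hcosset]; exact ⟨htI, hle⟩
        exact htB this
      obtain ⟨x, hx_def⟩ : ∃ x : ℝ, l * Real.cos t - l + 1 = x := ⟨_, rfl⟩
      have hfx : f t = (Polynomial.Chebyshev.T ℝ n).eval x := by rw [hf t, hx_def]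
      have hx1 : -1 < x := by
        have h5 : l * c < l * Real.cos t := mul_lt_mul_of_pos_left hct hl0
        linarith only [hcl, hx_def, h5]
      have hx2 : x ≤ 1 := by
        have h5 : l * Real.cos t ≤ l * 1 := mul_le_mul_of_nonneg_left (Real.cos_le_one t) hl0.le
        linarith only [hx_def, h5]
      have habs : |f t| ≤ 1 := by
        have hcx : Real.cos (Real.arccos x) = x := Real.cos_arccos hx1.le hx2
        rw [hfx, ← hcx, Polynomial.Chebyshev.T_real_cos]
        exact Real.abs_cos_le_one _
      have hsq : (f t)^2 = 1 := by
        have h6 : |f t| = 1 := le_antisymm habs hft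
        rw [← sq_abs (f t), h6]; norm_num
      have hroot : Polynomial.IsRoot P x := by
        rw [← hP_def]
        simp only [Polynomial.IsRoot, Polynomial.eval_sub, Polynomial.eval_pow,
          Polynomial.eval_one]
        rw [← hfx]
        linarith [hsq]
      have hmem : φ x ∈ φ '' {x : ℝ | Polynomial.IsRoot P x} := ⟨x, hroot, rfl⟩
      refine Set.mem_biUnion hmem ⟨htI, ?_⟩
      rw [← hφ_def]
      show Real.cos t = (x + l - 1)/l
      rw [← hx_def]
      field_simp
      ring
    have hfin2 : (⋃ a ∈ φ '' {x : ℝ | Polynomial.IsRoot P x},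
        {t : ℝ | t ∈ Set.Ico 0 (2*π) ∧ Real.cos t = a}).Finite := by
      refine Set.Finite.biUnion (hSfin.image φ) (fun a _ => ?_)
      exact ((Set.finite_singleton _).insert _).subset (cos_fiber_subset a)
    exact hfin2.subset hsub
  -- measure computation
  have hae : A =ᵐ[volume] B := (MeasureTheory.ae_eq_set).2
    ⟨hABfin.measure_zero _, by rw [Set.diff_eq_empty.2 hBA]; simp⟩
  rw [measure_congr hae, ← hB_def, Real.volume_Icc, harc]
  congr 1
  ring
end

section
/- For every integer N ≥ 1, lim_{t → 1⁻} arccos(t^N) / arccos(t) = √N, and for all t ∈ [0, 1), arccos(t^N) / arccos(t) ≤ √N. -/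
open Real Filter

lemma arccos_eq_two_arcsin {x : ℝ} (h1 : -1 ≤ x) (h2 : x ≤ 1) :
    Real.arccos x = 2 * Real.arcsin (Real.sqrt ((1 - x) / 2)) := by
  have hnn : (0:ℝ) ≤ (1 - x) / 2 := by linarith
  have hle1 : (1 - x) / 2 ≤ 1 := by linarith
  have hs0 : 0 ≤ Real.sqrt ((1 - x) / 2) := Real.sqrt_nonneg _
  have hs1 : Real.sqrt ((1 - x) / 2) ≤ 1 := by
    exact Real.sqrt_le_one.2 hle1
  have harcsin0 : 0 ≤ Real.arcsin (Real.sqrt ((1 - x) / 2)) := Real.arcsin_nonneg.2 hs0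
  have harcsinle : Real.arcsin (Real.sqrt ((1 - x) / 2)) ≤ π / 2 := Real.arcsin_le_pi_div_two _
  apply Real.injOn_cos
  · exact ⟨Real.arccos_nonneg x, Real.arccos_le_pi x⟩
  · constructor <;> nlinarith
  · rw [Real.cos_arccos h1 h2, Real.cos_two_mul, Real.cos_arcsin,
      Real.sq_sqrt (by nlinarith : (0:ℝ) ≤ 1 - Real.sqrt ((1 - x) / 2) ^ 2),
      Real.sq_sqrt hnn]
    ring

lemma tendsto_arcsin_div : Tendsto (fun y : ℝ => Real.arcsin y / y) (nhdsWithin 0 {0}ᶜ) (nhds 1) := by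
  have h := Real.hasDerivAt_arcsin (by norm_num : (0:ℝ) ≠ -1) (by norm_num : (0:ℝ) ≠ 1)
  rw [hasDerivAt_iff_tendsto_slope] at h
  simp only [ne_eq, OfNat.ofNat_ne_zero, not_false_eq_true, zero_pow, sub_zero, Real.sqrt_one,
    div_one] at h
  refine h.congr fun y => ?_
  simp [slope_fun_def, Real.arcsin_zero, div_eq_inv_mul]

lemma geom_bound {u : ℝ} (h0 : 0 ≤ u) (h1 : u ≤ 1) (N : ℕ) :
    (N : ℝ) * u ^ (N - 1) * (1 - u) ≤ 1 - u ^ N := by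
  have hsum : (1 - u ^ N) = (∑ i ∈ Finset.range N, u ^ i) * (1 - u) := by
    have := geom_sum_mul u N
    nlinarith [this]
  rw [hsum]
  have hge : (N : ℝ) * u ^ (N - 1) ≤ ∑ i ∈ Finset.range N, u ^ i := by
    have := Finset.card_nsmul_le_sum (Finset.range N) (fun i => u ^ i) (u ^ (N - 1))
      (fun i hi => pow_le_pow_of_le_one h0 h1 (by
        have := Finset.mem_range.1 hi; omega))
    simpa [nsmul_eq_mul] using this
  nlinarith [sub_nonneg.2 h1]

lemma key_ineq (N : ℕ) (hN : 1 ≤ N) {t : ℝ} (ht : t ∈ Set.Icc (0:ℝ) 1) :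
    Real.arccos (t ^ N) ≤ Real.sqrt N * Real.arccos t := by
  set F : ℝ → ℝ := fun x => Real.sqrt N * Real.arccos x - Real.arccos (x ^ N) with hF
  have hanti : AntitoneOn F (Set.Icc 0 1) := by
    apply antitoneOn_of_deriv_nonpos (convex_Icc 0 1)
    · exact ((continuous_const.mul Real.continuous_arccos).sub
        (Real.continuous_arccos.comp (continuous_pow N))).continuousOn
    · intro x hx
      rw [interior_Icc] at hx
      have hx1 : x ≠ -1 := by intro h; rw [h] at hx; exact absurd hx.1 (by norm_num)
      have hx2 : x ≠ 1 := ne_of_lt hx.2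
      have hxN : x ^ N ≠ -1 := by
        have : (0:ℝ) < x ^ N := pow_pos hx.1 N
        linarith
      have hxN2 : x ^ N ≠ 1 := ne_of_lt (pow_lt_one₀ hx.1.le hx.2 (by omega))
      exact (((Real.hasDerivAt_arccos hx1 hx2).const_mul _).sub
        (((Real.hasDerivAt_arccos hxN hxN2).comp x (hasDerivAt_pow N x)))).differentiableAt.differentiableWithinAt
    · intro x hx
      rw [interior_Icc] at hx
      have hx0 : 0 < x := hx.1
      have hx1 : x < 1 := hx.2
      have hxN0 : 0 < x ^ N := pow_pos hx0 N
      have hxN1 : x ^ N < 1 := pow_lt_one₀ hx0.le hx1 (by omega)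
      have hd : HasDerivAt F (Real.sqrt N * (-(1 / Real.sqrt (1 - x ^ 2))) -
          (-(1 / Real.sqrt (1 - (x ^ N) ^ 2))) * ((N : ℝ) * x ^ (N - 1))) x := by
        exact ((Real.hasDerivAt_arccos (by linarith) (ne_of_lt hx1)).const_mul _).sub
          ((Real.hasDerivAt_arccos (by linarith) (ne_of_lt hxN1)).comp x (hasDerivAt_pow N x))
      rw [hd.deriv]
      have hA : (0:ℝ) < Real.sqrt (1 - x ^ 2) := Real.sqrt_pos.2 (by nlinarith)
      have hB : (0:ℝ) < Real.sqrt (1 - (x ^ N) ^ 2) := Real.sqrt_pos.2 (by nlinarith)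
      rw [sub_nonpos]
      -- goal: √N * (-(1/A)) ≤ -(1/B) * (N * x^(N-1))  i.e. N x^(N-1)/B ≤ √N/A
      rw [neg_mul, mul_neg, neg_le_neg_iff, div_mul_eq_mul_div, one_mul, mul_comm,
        mul_one_div, div_le_div_iff₀ hB hA]
      -- N * x^(N-1) * A ≤ √N * B
      have key : (N : ℝ) * x ^ (N - 1) * Real.sqrt (1 - x ^ 2) ≤
          Real.sqrt N * Real.sqrt (1 - (x ^ N) ^ 2) := by
        have hsq : ((N : ℝ) * x ^ (N - 1) * Real.sqrt (1 - x ^ 2)) ^ 2 ≤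
            (Real.sqrt N * Real.sqrt (1 - (x ^ N) ^ 2)) ^ 2 := by
          have e1 : Real.sqrt (1 - x ^ 2) ^ 2 = 1 - x ^ 2 := Real.sq_sqrt (by nlinarith)
          have e2 : Real.sqrt (1 - (x ^ N) ^ 2) ^ 2 = 1 - (x ^ N) ^ 2 :=
            Real.sq_sqrt (by nlinarith)
          have e3 : Real.sqrt N ^ 2 = (N : ℝ) := Real.sq_sqrt (Nat.cast_nonneg N)
          have hgb := geom_bound (u := x ^ 2) (by positivity) (by nlinarith) N
          have hup : (x ^ 2) ^ (N - 1) = x ^ (N - 1) * x ^ (N - 1) := by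
            rw [← pow_mul, ← pow_add]; congr 1; omega
          have hupN : (x ^ 2) ^ N = (x ^ N) ^ 2 := by rw [← pow_mul, ← pow_mul, Nat.mul_comm]
          rw [mul_pow, mul_pow, mul_pow, e1, e2, e3]
          have hN1 : (1:ℝ) ≤ (N:ℝ) := by exact_mod_cast hN
          rw [hup, hupN] at hgb
          have h4 := mul_le_mul_of_nonneg_left hgb (by linarith : (0:ℝ) ≤ (N:ℝ))
          nlinarith [h4]
        have h2 : (0:ℝ) ≤ Real.sqrt N * Real.sqrt (1 - (x ^ N) ^ 2) := by positivity
        nlinarith [mul_self_nonneg ((N : ℝ) * x ^ (N - 1) * Real.sqrt (1 - x ^ 2))]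
      nlinarith [key]
  have h01 : (1:ℝ) ∈ Set.Icc (0:ℝ) 1 := by norm_num
  have := hanti ht h01 ht.2
  simp only [hF, one_pow, Real.arccos_one, mul_zero, sub_zero] at this
  linarith

theorem stmt_18 (N : ℕ) (hN : 1 ≤ N) :
    Filter.Tendsto (fun t : ℝ => Real.arccos (t ^ N) / Real.arccos t)
      (nhdsWithin 1 (Set.Iio 1)) (nhds (Real.sqrt N)) ∧
    ∀ t ∈ Set.Ico (0 : ℝ) 1, Real.arccos (t ^ N) / Real.arccos t ≤ Real.sqrt N := by
  constructor
  · set a : ℝ → ℝ := fun t => Real.sqrt ((1 - t ^ N) / 2) with ha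
    set b : ℝ → ℝ := fun t => Real.sqrt ((1 - t) / 2) with hb
    set s : ℝ → ℝ := fun t => Real.sqrt (∑ k ∈ Finset.range N, t ^ k) with hs
    have hev : ∀ᶠ t in nhdsWithin 1 (Set.Iio 1), t ∈ Set.Ioo (0:ℝ) 1 := by
      have h1 : Set.Ioi (0:ℝ) ∈ nhdsWithin (1:ℝ) (Set.Iio 1) :=
        nhdsWithin_le_nhds (Ioi_mem_nhds one_pos)
      have h2 : Set.Iio (1:ℝ) ∈ nhdsWithin (1:ℝ) (Set.Iio 1) := self_mem_nhdsWithin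
      filter_upwards [h1, h2] with t ht1 ht2 using ⟨ht1, ht2⟩
    have hevpow : ∀ᶠ t in nhdsWithin 1 (Set.Iio 1), t ^ N ∈ Set.Ioo (0:ℝ) 1 := by
      filter_upwards [hev] with t ht
      exact ⟨pow_pos ht.1 N, pow_lt_one₀ ht.1.le ht.2 (by omega)⟩
    have haT : Tendsto a (nhdsWithin 1 (Set.Iio 1)) (nhdsWithin 0 {0}ᶜ) := by
      apply tendsto_nhdsWithin_of_tendsto_nhds_of_eventually_within
      · have : Continuous a := by
          apply Real.continuous_sqrt.comp; continuity
        have h1 : a 1 = 0 := by simp [ha]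
        simpa [h1] using (this.tendsto 1).mono_left nhdsWithin_le_nhds
      · filter_upwards [hevpow] with t ht
        simp only [Set.mem_compl_iff, Set.mem_singleton_iff, ha]
        have : (0:ℝ) < (1 - t ^ N) / 2 := by have := ht.2; linarith
        exact ne_of_gt (Real.sqrt_pos.2 this)
    have hbT : Tendsto b (nhdsWithin 1 (Set.Iio 1)) (nhdsWithin 0 {0}ᶜ) := by
      apply tendsto_nhdsWithin_of_tendsto_nhds_of_eventually_within
      · have : Continuous b := by
          apply Real.continuous_sqrt.comp; continuity
        have h1 : b 1 = 0 := by simp [hb]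
        simpa [h1] using (this.tendsto 1).mono_left nhdsWithin_le_nhds
      · filter_upwards [hev] with t ht
        simp only [Set.mem_compl_iff, Set.mem_singleton_iff, hb]
        have : (0:ℝ) < (1 - t) / 2 := by have := ht.2; linarith
        exact ne_of_gt (Real.sqrt_pos.2 this)
    have hsT : Tendsto s (nhdsWithin 1 (Set.Iio 1)) (nhds (Real.sqrt N)) := by
      have hc : Continuous s := by
        apply Real.continuous_sqrt.comp; continuity
      have h1 : s 1 = Real.sqrt N := by simp [hs]
      simpa [h1] using (hc.tendsto 1).mono_left nhdsWithin_le_nhds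
    have hmain : Tendsto (fun t => (Real.arcsin (a t) / a t) *
        (Real.arcsin (b t) / b t)⁻¹ * s t) (nhdsWithin 1 (Set.Iio 1))
        (nhds (1 * 1⁻¹ * Real.sqrt N)) :=
      (((tendsto_arcsin_div.comp haT).mul
        ((tendsto_arcsin_div.comp hbT).inv₀ one_ne_zero))).mul hsT
    rw [show (1:ℝ) * 1⁻¹ * Real.sqrt N = Real.sqrt N by norm_num] at hmain
    refine hmain.congr' ?_
    filter_upwards [hev, hevpow] with t ht htN
    have hapos : 0 < a t := Real.sqrt_pos.2 (by have := htN.2; linarith)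
    have hbpos : 0 < b t := Real.sqrt_pos.2 (by have := ht.2; linarith)
    have hasin : 0 < Real.arcsin (a t) := Real.arcsin_pos.2 hapos
    have hbsin : 0 < Real.arcsin (b t) := Real.arcsin_pos.2 hbpos
    have hst : s t = a t / b t := by
      have hne : (1:ℝ) - t ≠ 0 := by have := ht.2; intro h; linarith [sub_eq_zero.1 h]
      have hgeq : (∑ k ∈ Finset.range N, t ^ k) = ((1 - t ^ N) / 2) / ((1 - t) / 2) := by
        have h2 : ((1 - t ^ N) / 2) / ((1 - t) / 2) = (1 - t ^ N) / (1 - t) := by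
          field_simp
        rw [h2, eq_div_iff hne]
        linear_combination (-1 : ℝ) * geom_sum_mul t N
      show Real.sqrt (∑ k ∈ Finset.range N, t ^ k) = _
      rw [hgeq, Real.sqrt_div (by have := htN.2; linarith)]
    have hcosN : Real.arccos (t ^ N) = 2 * Real.arcsin (a t) :=
      arccos_eq_two_arcsin (by linarith [htN.1]) htN.2.le
    have hcos : Real.arccos t = 2 * Real.arcsin (b t) :=
      arccos_eq_two_arcsin (by linarith [ht.1]) ht.2.le
    show (Real.arcsin (a t) / a t) * (Real.arcsin (b t) / b t)⁻¹ * s t =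
      Real.arccos (t ^ N) / Real.arccos t
    rw [hcosN, hcos, hst]
    field_simp
  · intro t ht
    have hkey := key_ineq N hN ⟨ht.1, ht.2.le⟩
    have hpos : 0 < Real.arccos t := Real.arccos_pos.2 ht.2
    rw [div_le_iff₀ hpos]
    exact hkey
end

section
/- Let ρ > 0 and m ≥ 1. For every compact set Q ⊂ ℝ of Lebesgue measure 2ρ and every monic real polynomial P of degree m, sup_{x ∈ Q} |P(x)| ≥ 2 (ρ/2)^m; equivalently, the infimum over monic degree-m polynomials of the sup-norm on Q is at least 2(ρ/2)^m, with equality (of the infimum) when Q is a segment of length 2ρ. -/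
/-!
Over ℂ, a real monic `P` of degree `m` factors as `∏ (x - zᵢ)`, so `|P x| ≥ ∏ |x - Re zᵢ|` on ℝ.
The distribution function `φ x = |Q ∩ (-∞, x]|` is 1-Lipschitz and maps `Q` onto `[0, |Q|]`;
hence the monic `R = ∏ (X - φ (Re zᵢ))` satisfies `|R (φ x)| ≤ |P x|`, and the sup of `|R|` on
`[0, |Q|]` is at most the sup of `|P|` on `Q`. Chebyshev's theorem (a monic polynomial of degree `m`
has sup-norm at least `2 (L/4)^m` on an interval of length `L`, with equality for the rescaled
`Tₘ`) bounds the former from below.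
-/

open Real MeasureTheory Polynomial

theorem le_biSup_of_bddAbove_image {α β : Type*} [ConditionallyCompleteLattice α] {f : β → α}
    {s : Set β} (hf : BddAbove (f '' s)) {x : β} (hx : x ∈ s) : f x ≤ ⨆ y ∈ s, f y :=
  le_ciSup₂ (f := fun y (_ : y ∈ s) => f y)
    (hf.mono (Set.iUnion_subset fun _ => Set.range_subset_iff.mpr (Set.mem_image_of_mem f))) x hx

namespace Polynomial

theorem leadingCoeff_le_two_pow_mul_of_forall_abs_le {n : ℕ} {P : ℝ[X]} {M : ℝ}
    (hdeg : P.degree ≤ n) (hbnd : ∀ x ∈ Set.Icc (-1 : ℝ) 1, |P.eval x| ≤ M) :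
    P.leadingCoeff ≤ 2 ^ (n - 1) * M := by
  have hM : 0 ≤ M := (abs_nonneg _).trans (hbnd 0 (by norm_num))
  rcases hM.eq_or_lt with rfl | hM
  · have hP : P = 0 := P.eq_zero_of_infinite_isRoot <|
      (Set.Icc_infinite (by norm_num : (-1 : ℝ) < 1)).mono
        fun x hx => abs_nonpos_iff.mp (hbnd x hx)
    simp [hP]
  · have h := Chebyshev.leadingCoeff_le_of_forall_abs_le_one (P := C M⁻¹ * P)
      ((degree_C_mul (inv_ne_zero hM.ne')).trans_le hdeg) fun x hx => by
        rw [eval_mul, eval_C, abs_mul, abs_inv, abs_of_pos hM, inv_mul_le_iff₀ hM, mul_one]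
        exact hbnd x hx
    rw [leadingCoeff_mul, leadingCoeff_C, inv_mul_le_iff₀ hM] at h
    linarith

theorem Monic.two_mul_div_four_pow_le_of_forall_abs_le {R : ℝ[X]} (hR : R.Monic)
    (hdeg : 1 ≤ R.natDegree) {a b M : ℝ} (hab : a < b)
    (hbnd : ∀ x ∈ Set.Icc a b, |R.eval x| ≤ M) : 2 * ((b - a) / 4) ^ R.natDegree ≤ M := by
  set r := (b - a) / 2
  have hr : 0 < r := by positivity
  set q : ℝ[X] := C r * X + C ((a + b) / 2)
  have hq : q.natDegree = 1 := natDegree_linear hr.ne'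
  have hlc : (R.comp q).leadingCoeff = r ^ R.natDegree := by
    rw [leadingCoeff_comp (by rw [hq]; norm_num), hR.leadingCoeff, one_mul,
      leadingCoeff_linear hr.ne']
  have key := leadingCoeff_le_two_pow_mul_of_forall_abs_le (n := R.natDegree) (P := R.comp q)
    (M := M) (degree_le_of_natDegree_le (by rw [natDegree_comp, hq, mul_one])) fun u hu => by
      rw [eval_comp]
      refine hbnd _ ⟨?_, ?_⟩ <;> simp only [q, eval_add, eval_mul, eval_C, eval_X, r] <;>
        nlinarith [hu.1, hu.2]
  obtain ⟨k, hk⟩ := Nat.exists_eq_add_of_le' hdeg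
  rw [hlc, hk, Nat.add_sub_cancel] at key
  rw [hk, show (b - a) / 4 = r / 2 by ring, div_pow, pow_succ 2 k]
  calc 2 * (r ^ (k + 1) / (2 ^ k * 2)) = r ^ (k + 1) / 2 ^ k := by field_simp
    _ ≤ M := by rwa [div_le_iff₀ (by positivity), mul_comm]

theorem Monic.exists_prod_abs_sub_le_abs_eval {P : ℝ[X]} (hP : P.Monic) :
    ∃ A : Multiset ℝ, Multiset.card A = P.natDegree ∧
      ∀ x, (A.map fun a => |x - a|).prod ≤ |P.eval x| := by
  refine ⟨(P.aroots ℂ).map Complex.re, by simp [IsAlgClosed.card_aroots_eq_natDegree],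
    fun x => ?_⟩
  have hsplit : (P.map (algebraMap ℝ ℂ)).Splits := IsAlgClosed.splits _
  calc ((P.aroots ℂ).map Complex.re |>.map fun a => |x - a|).prod
      = ((P.aroots ℂ).map fun z => |((x : ℂ) - z).re|).prod := by simp [Multiset.map_map]
    _ ≤ ((P.aroots ℂ).map fun z => ‖(x : ℂ) - z‖).prod :=
        Multiset.prod_map_le_prod_map₀ _ _ (fun _ _ => abs_nonneg _)
          fun z _ => Complex.abs_re_le_norm _
    _ = ‖P.aeval (x : ℂ)‖ := by
        rw [hsplit.aeval_eq_prod_aroots_of_monic hP, ← normHom_apply (α := ℂ), map_multiset_prod,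
          Multiset.map_map]
        rfl
    _ = |P.eval x| := by
        rw [← Complex.coe_algebraMap, aeval_algebraMap_apply, Complex.coe_algebraMap,
          Complex.norm_real, Real.norm_eq_abs, coe_aeval_eq_eval]

end Polynomial

-- `Tₘ` composed with the affine bijection `[a, b] → [-1, 1]`, rescaled to be monic.
noncomputable def chebyshevMonic (m : ℕ) (a b : ℝ) : ℝ[X] :=
  C (2 * ((b - a) / 4) ^ m) * (Chebyshev.T ℝ m).comp (C (2 / (b - a)) * X + C ((a + b) / (a - b)))

section chebyshevMonic

variable {m : ℕ} {a b : ℝ}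

theorem eval_chebyshevMonic (x : ℝ) : (chebyshevMonic m a b).eval x =
    2 * ((b - a) / 4) ^ m * (Chebyshev.T ℝ m).eval (2 / (b - a) * x + (a + b) / (a - b)) := by
  simp [chebyshevMonic]

theorem monic_chebyshevMonic (hm : 1 ≤ m) (hab : a < b) : (chebyshevMonic m a b).Monic := by
  have hba : 0 < b - a := by linarith
  rw [Monic, chebyshevMonic, leadingCoeff_mul, leadingCoeff_C,
    leadingCoeff_comp (by rw [natDegree_linear (by positivity)]; norm_num),
    leadingCoeff_linear (by positivity), Chebyshev.leadingCoeff_T, Chebyshev.natDegree_T,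
    Int.natAbs_natCast]
  obtain ⟨k, rfl⟩ := Nat.exists_eq_add_of_le' hm
  rw [Nat.add_sub_cancel]
  generalize b - a = d at hba ⊢
  have hd : d / 4 * (2 / d) = 2⁻¹ := by field_simp; norm_num
  calc 2 * (d / 4) ^ (k + 1) * (2 ^ k * (2 / d) ^ (k + 1))
      = 2 ^ (k + 1) * ((d / 4) ^ (k + 1) * (2 / d) ^ (k + 1)) := by ring
    _ = 1 := by rw [← mul_pow, hd, ← mul_pow]; norm_num

theorem natDegree_chebyshevMonic (hab : a < b) :
    (chebyshevMonic m a b).natDegree = m := by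
  have hba : 0 < b - a := by linarith
  rw [chebyshevMonic, natDegree_C_mul (by positivity), natDegree_comp,
    natDegree_linear (by positivity), Chebyshev.natDegree_T, Int.natAbs_natCast, mul_one]

theorem abs_eval_chebyshevMonic_le (hab : a < b) {x : ℝ} (hx : x ∈ Set.Icc a b) :
    |(chebyshevMonic m a b).eval x| ≤ 2 * ((b - a) / 4) ^ m := by
  have hba : 0 < b - a := by linarith
  rw [eval_chebyshevMonic, abs_mul, abs_of_pos (by positivity)]
  refine mul_le_of_le_one_right (by positivity) (Chebyshev.abs_eval_T_real_le_one _ ?_)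
  rw [show 2 / (b - a) * x + (a + b) / (a - b) = (2 * x - a - b) / (b - a) by
      field_simp [hba.ne', (sub_neg.mpr hab).ne]; ring, abs_div,
    abs_of_pos hba, div_le_one hba, abs_le]
  constructor <;> linarith [hx.1, hx.2]

theorem eval_chebyshevMonic_right (hab : a < b) :
    (chebyshevMonic m a b).eval b = 2 * ((b - a) / 4) ^ m := by
  have : 2 / (b - a) * b + (a + b) / (a - b) = 1 := by
    field_simp [(sub_pos.mpr hab).ne', (sub_neg.mpr hab).ne]; ring
  rw [eval_chebyshevMonic, this, Chebyshev.T_eval_one, mul_one]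

theorem iSup_Icc_abs_eval_chebyshevMonic (hab : a < b) :
    ⨆ x ∈ Set.Icc a b, |(chebyshevMonic m a b).eval x| = 2 * ((b - a) / 4) ^ m := by
  have hba : 0 < b - a := by linarith
  have hβ : 0 ≤ 2 * ((b - a) / 4) ^ m := by positivity
  refine le_antisymm
    (Real.iSup_le (fun _ => Real.iSup_le (abs_eval_chebyshevMonic_le hab) hβ) hβ) ?_
  calc 2 * ((b - a) / 4) ^ m = |(chebyshevMonic m a b).eval b| := by
        rw [eval_chebyshevMonic_right hab, abs_of_nonneg hβ]
    _ ≤ _ := le_biSup_of_bddAbove_image ⟨_, Set.forall_mem_image.mpr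
        fun _ hx => abs_eval_chebyshevMonic_le hab hx⟩ (Set.right_mem_Icc.mpr hab.le)

end chebyshevMonic

theorem IsCompact.exists_lipschitzWith_Icc_volume_subset_image {K : Set ℝ} (hK : IsCompact K)
    (hne : K.Nonempty) :
    ∃ φ : ℝ → ℝ, LipschitzWith 1 φ ∧ Set.Icc 0 (volume.real K) ⊆ φ '' K := by
  set φ : ℝ → ℝ := fun x => volume.real (K ∩ Set.Iic x)
  have hK' : volume K ≠ ⊤ := hK.measure_lt_top.ne
  have hlip : LipschitzWith 1 φ := LipschitzWith.of_le_add fun x y => by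
    have hsub : K ∩ Set.Iic x ⊆ (K ∩ Set.Iic y) ∪ Set.Ioc y x := fun z ⟨hzK, hzx⟩ =>
      (le_or_gt z y).imp (fun hzy => ⟨hzK, hzy⟩) fun hyz => ⟨hyz, hzx⟩
    calc φ x ≤ volume.real ((K ∩ Set.Iic y) ∪ Set.Ioc y x) :=
          measureReal_mono hsub (measure_union_lt_top (measure_inter_lt_top_of_left_ne_top hK')
            measure_Ioc_lt_top).ne
      _ ≤ φ y + volume.real (Set.Ioc y x) := measureReal_union_le _ _
      _ ≤ φ y + dist x y := by
          rw [Real.volume_real_Ioc, Real.dist_eq]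
          gcongr
          exact max_le (le_abs_self _) (abs_nonneg _)
  refine ⟨φ, hlip, fun t ht => ?_⟩
  have hinf : φ (sInf K) = 0 := by
    have : volume (K ∩ Set.Iic (sInf K)) = 0 := measure_mono_null (t := {sInf K})
      (fun z ⟨hzK, hz⟩ => le_antisymm hz (csInf_le hK.bddBelow hzK)) (measure_singleton _)
    simp [φ, measureReal_def, this]
  have hsup : φ (sSup K) = volume.real K := by
    have : K ∩ Set.Iic (sSup K) = K :=
      Set.inter_eq_left.mpr fun z hz => show z ≤ sSup K from le_csSup hK.bddAbove hz
    simp only [φ, this]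
  obtain ⟨x, hx, rfl⟩ := intermediate_value_Icc (csInf_le_csSup hne hK.bddBelow hK.bddAbove)
    hlip.continuous.continuousOn (by rwa [hinf, hsup])
  have hcpt : IsCompact (K ∩ Set.Iic x) := hK.inter_right isClosed_Iic
  have hw := hcpt.sSup_mem ⟨sInf K, hK.sInf_mem hne, hx.1⟩
  refine ⟨sSup (K ∩ Set.Iic x), hw.1, ?_⟩
  simp only [φ]
  congr 1
  ext z
  exact ⟨fun ⟨hzK, hzw⟩ => ⟨hzK, show z ≤ x from le_trans hzw hw.2⟩,
    fun hz => ⟨hz.1, le_csSup hcpt.bddAbove hz⟩⟩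

namespace Polynomial

theorem Monic.two_mul_volume_div_four_pow_le_of_forall_abs_le {P : ℝ[X]}
    (hP : P.Monic) (hdeg : 1 ≤ P.natDegree) {Q : Set ℝ} (hQ : IsCompact Q)
    (hvol : 0 < volume.real Q) {M : ℝ} (hbnd : ∀ x ∈ Q, |P.eval x| ≤ M) :
    2 * (volume.real Q / 4) ^ P.natDegree ≤ M := by
  have hne : Q.Nonempty := Set.nonempty_iff_ne_empty.mpr fun h => by simp [h] at hvol
  obtain ⟨A, hcard, hA⟩ := hP.exists_prod_abs_sub_le_abs_eval
  obtain ⟨φ, hφ, hsurj⟩ := hQ.exists_lipschitzWith_Icc_volume_subset_image hne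
  set R : ℝ[X] := ((A.map φ).map fun b => X - C b).prod
  have hR : R.Monic := monic_multiset_prod_of_monic _ _ fun b _ => monic_X_sub_C b
  have hRdeg : R.natDegree = P.natDegree := by
    rw [natDegree_multiset_prod_X_sub_C_eq_card, Multiset.card_map, hcard]
  have key := hR.two_mul_div_four_pow_le_of_forall_abs_le (hRdeg ▸ hdeg) hvol fun t ht => by
    obtain ⟨x, hx, rfl⟩ := hsurj ht
    calc |R.eval (φ x)| = (A.map fun a => |φ x - φ a|).prod := by
          simp only [R, eval_multiset_prod, Multiset.map_map, Function.comp_def, eval_sub, eval_X,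
            eval_C]
          exact (map_multiset_prod (absHom (α := ℝ)) _).trans (by rw [Multiset.map_map]; rfl)
      _ ≤ (A.map fun a => |x - a|).prod :=
          Multiset.prod_map_le_prod_map₀ _ _ (fun _ _ => abs_nonneg _) fun a _ => by
            simpa [Real.dist_eq] using hφ.dist_le_mul x a
      _ ≤ M := (hA x).trans (hbnd x hx)
  rwa [hRdeg, sub_zero] at key

theorem Monic.two_mul_half_pow_le_iSup_abs_eval {P : ℝ[X]} (hP : P.Monic)
    (hdeg : 1 ≤ P.natDegree) {Q : Set ℝ} (hQ : IsCompact Q) {ρ : ℝ} (hρ : 0 < ρ)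
    (hvol : volume Q = ENNReal.ofReal (2 * ρ)) :
    2 * (ρ / 2) ^ P.natDegree ≤ ⨆ x ∈ Q, |P.eval x| := by
  have hreal : volume.real Q = 2 * ρ := by
    rw [measureReal_def, hvol, ENNReal.toReal_ofReal (by positivity)]
  have h := hP.two_mul_volume_div_four_pow_le_of_forall_abs_le hdeg hQ (by rw [hreal]; positivity)
    fun x hx => le_biSup_of_bddAbove_image (f := fun x => |P.eval x|)
      (hQ.image (by fun_prop)).bddAbove hx
  rwa [hreal, show 2 * ρ / 4 = ρ / 2 by ring] at h

end Polynomial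

theorem stmt_19 (m : ℕ) (hm : 1 ≤ m) (ρ : ℝ) (hρ : 0 < ρ) :
    (∀ Q : Set ℝ, IsCompact Q → volume Q = ENNReal.ofReal (2 * ρ) →
      ∀ P : Polynomial ℝ, P.Monic → P.natDegree = m →
        2 * (ρ / 2) ^ m ≤ ⨆ x ∈ Q, |P.eval x|) ∧
    ∀ a : ℝ,
      sInf {M : ℝ | ∃ P : Polynomial ℝ, P.Monic ∧ P.natDegree = m ∧
          M = ⨆ x ∈ Set.Icc a (a + 2 * ρ), |P.eval x|}
        = 2 * (ρ / 2) ^ m := by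
  refine ⟨fun Q hQ hvol P hP hPm => ?_, fun a => IsLeast.csInf_eq ⟨?_, ?_⟩⟩
  · subst hPm
    exact hP.two_mul_half_pow_le_iSup_abs_eval hm hQ hρ hvol
  · have hab : a < a + 2 * ρ := by linarith
    refine ⟨chebyshevMonic m a (a + 2 * ρ), monic_chebyshevMonic hm hab,
      natDegree_chebyshevMonic hab, ?_⟩
    rw [iSup_Icc_abs_eval_chebyshevMonic hab, show (a + 2 * ρ - a) / 4 = ρ / 2 by ring]
  · rintro _ ⟨P, hP, rfl, rfl⟩
    exact hP.two_mul_half_pow_le_iSup_abs_eval hm isCompact_Icc hρ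
      (by rw [Real.volume_Icc]; ring_nf)
end
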